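/- Let B be a left S-module and suppose F commutes with direct sums. Then (0,B) is silting (respectively, partial silting) in the comma category (F, S-Mod) if and only if B is silting (respectively, partial silting) as a left S-module. -/

import Mathlib

open CategoryTheory CategoryTheory.Limits

universe v u

section Generic

variable {𝒜 : Type*} [Category.{v} 𝒜]

/-- For a morphism `σ : P₁ ⟶ P₀`, the class `D_σ` of objects `X` such that
`Hom(σ, X)` is surjective. -/
def Dclass {P₁ P₀ : 𝒜} (σ : P₁ ⟶ P₀) : Set 𝒜 :=
  {X | ∀ g : P₁ ⟶ X, ∃ h : P₀ ⟶ X, σ ≫ h = g}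

/-- `Gen T` is the class of objects admitting an epimorphism from a coproduct (direct sum)
of copies of `T`. -/
def Gen (T : 𝒜) : Set 𝒜 :=
  {X | ∃ (ι : Type v) (c : Cofan (fun _ : ι => T)) (_ : IsColimit c) (f : c.pt ⟶ X), Epi f}

variable [HasZeroMorphisms 𝒜]

/-- A projective presentation `P₁ → P₀ → T → 0` of an object `T`. -/
structure ProjPres (T : 𝒜) where
  P₁ : 𝒜
  P₀ : 𝒜
  σ : P₁ ⟶ P₀
  π : P₀ ⟶ T
  projective₁ : Projective P₁
  projective₀ : Projective P₀
  epi : Epi π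
  w : σ ≫ π = 0
  exact : (ShortComplex.mk σ π w).Exact

/-- A class of objects is a torsion class if it is closed under (epimorphic) images,
direct sums (coproducts) and extensions. -/
def IsTorsionClass (𝒞 : Set 𝒜) : Prop :=
  (∀ ⦃X Y : 𝒜⦄ (f : X ⟶ Y), Epi f → X ∈ 𝒞 → Y ∈ 𝒞) ∧
  (∀ (ι : Type v) (Xs : ι → 𝒜) (c : Cofan Xs), IsColimit c → (∀ i, Xs i ∈ 𝒞) → c.pt ∈ 𝒞) ∧
  (∀ (E : ShortComplex 𝒜), E.ShortExact → E.X₁ ∈ 𝒞 → E.X₃ ∈ 𝒞 → E.X₂ ∈ 𝒞)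

/-- `T` is a silting object (with respect to some projective presentation) if it admits a
projective presentation `σ` with `D_σ = Gen T`. -/
def IsSilting (T : 𝒜) : Prop :=
  ∃ p : ProjPres T, Dclass p.σ = Gen T

/-- `T` is a partial silting object if it admits a projective presentation `σ` such that
`D_σ` is a torsion class and `T ∈ D_σ`. -/
def IsPartialSilting (T : 𝒜) : Prop :=
  ∃ p : ProjPres T, IsTorsionClass (Dclass p.σ) ∧ T ∈ Dclass p.σ

end Generic

section CommaZero

variable {𝒜 : Type*} [Category 𝒜] {ℬ : Type*} [Category ℬ]
  [Preadditive 𝒜] [Preadditive ℬ] (F : 𝒜 ⥤ ℬ) [F.Additive]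

instance : HasZeroMorphisms (Comma F (𝟭 ℬ)) where
  zero X Y := ⟨{ left := 0, right := 0, w := by simp }⟩
  comp_zero {X Y} f Z := by
    apply CommaMorphism.ext
    · show f.left ≫ 0 = 0
      simp
    · show f.right ≫ 0 = 0
      simp
  zero_comp X {Y Z} f := by
    apply CommaMorphism.ext
    · show 0 ≫ f.left = 0
      simp
    · show 0 ≫ f.right = 0
      simp

end CommaZero

section ModComma

variable {R S : Type u} [Ring R] [Ring S]
  (F : ModuleCat.{u} R ⥤ ModuleCat.{u} S) [F.Additive]

/-- The object `(P, FP ⊕ Q)` of the comma category `(F, S-Mod)`, with structure map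
`(1,0) : FP ⟶ FP ⊕ Q`; it is isomorphic to `(P, FP) ⊕ (0, Q)`. -/
def pairObj (P : ModuleCat.{u} R) (Q : ModuleCat.{u} S) :
    Comma F (𝟭 (ModuleCat.{u} S)) where
  left := P
  right := ModuleCat.of S (F.obj P × Q)
  hom := ModuleCat.ofHom (LinearMap.inl S (F.obj P) Q)

/-- The morphism `(a, Fa ⊕ b) : (P₁, FP₁ ⊕ Q₁) ⟶ (P₀, FP₀ ⊕ Q₀)` in the comma
category `(F, S-Mod)`.  When `a = σ_A`, `b = σ_B` are projective presentations of `A` and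
`B`, this is the induced projective presentation `σ` of `(0,B) ⊕ (A, FA)`. -/
def pairMap {P₁ P₀ : ModuleCat.{u} R} {Q₁ Q₀ : ModuleCat.{u} S}
    (a : P₁ ⟶ P₀) (b : Q₁ ⟶ Q₀) : pairObj F P₁ Q₁ ⟶ pairObj F P₀ Q₀ where
  left := a
  right := ModuleCat.ofHom (LinearMap.prodMap (F.map a).hom b.hom)
  w := by
    apply ModuleCat.hom_ext
    apply LinearMap.ext
    intro x
    show ((LinearMap.inl S (F.obj P₀) Q₀).comp (F.map a).hom) x
        = ((LinearMap.prodMap (F.map a).hom b.hom).comp (LinearMap.inl S (F.obj P₁) Q₁)) x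
    simp
    first
      | simp [Function.comp_def, LinearMap.prodMap_apply]
      | exact Prod.ext rfl (map_zero _).symm

/-- The object `(M, 0)` of the comma category. -/
def leftObj (M : ModuleCat.{u} R) : Comma F (𝟭 (ModuleCat.{u} S)) where
  left := M
  right := ModuleCat.of S PUnit
  hom := 0

/-- The object `(0, N)` of the comma category. -/
def rightObj (N : ModuleCat.{u} S) : Comma F (𝟭 (ModuleCat.{u} S)) where
  left := ModuleCat.of R PUnit
  right := N
  hom := 0

/-- The object `(M, FM)` of the comma category, with the identity structure map. -/
def diagObj (M : ModuleCat.{u} R) : Comma F (𝟭 (ModuleCat.{u} S)) where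
  left := M
  right := F.obj M
  hom := 𝟙 (F.obj M)

end ModComma

/-! The functor `N ↦ (0, N)` has a left adjoint `C (A, B, φ) = B / im φ` and a right adjoint `snd`.
A projective presentation `σ` of `(0, B)` therefore yields the projective presentation `C σ` of
`B`, with `N ∈ D_{Cσ}` iff `(0, N) ∈ D_σ`. Conversely, since
`Hom((P, FP ⊕ Q), X) = Hom(P, X.left) × Hom(Q, X.right)` and only zero modules lie in `D_{R → 0}`,
a projective presentation `σ` of `B` yields the projective presentation `pairMap (R → 0) σ` of
`(0, B)`, whose class `D` consists of the `X` with `X.left = 0` and `X.right ∈ D_σ`. As `fst` and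
`snd` preserve coproducts and epimorphisms, `Gen (0, B)` consists of the `X` with `X.left = 0` and
`X.right ∈ Gen B`; and torsion classes pull back along the exact, coproduct-preserving functors
`fst`, `snd` and `(0, -)`. -/

section General

variable {𝒜 : Type*} [Category.{v} 𝒜] {ℬ : Type*} [Category.{v} ℬ]

lemma mem_Gen_of_iso {T X Y : 𝒜} (e : X ≅ Y) (hX : X ∈ Gen T) : Y ∈ Gen T := by
  obtain ⟨ι, c, hc, f, hf⟩ := hX
  exact ⟨ι, c, hc, f ≫ e.hom, epi_comp f e.hom⟩

lemma CategoryTheory.Limits.IsZero.of_mem_Gen [HasZeroMorphisms 𝒜] {T X : 𝒜} (hT : IsZero T)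
    (hX : X ∈ Gen T) : IsZero X := by
  obtain ⟨ι, c, hc, f, hf⟩ := hX
  have hc₀ : IsZero c.pt := (IsZero.iff_id_eq_zero _).2
    (Cofan.IsColimit.hom_ext hc _ _ fun _ => hT.eq_of_src _ _)
  exact hc₀.of_epi f

lemma CategoryTheory.Functor.map_mem_Gen (G : 𝒜 ⥤ ℬ)
    [∀ ι : Type v, PreservesColimitsOfShape (Discrete ι) G] [G.PreservesEpimorphisms] {T X : 𝒜}
    (hX : X ∈ Gen T) : G.obj X ∈ Gen (G.obj T) := by
  obtain ⟨ι, c, hc, f, hf⟩ := hX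
  exact ⟨ι, _, isColimitCofanMkObjOfIsColimit G _ c.inj hc, G.map f, inferInstance⟩

lemma CategoryTheory.Adjunction.mem_Dclass_map_iff {L : 𝒜 ⥤ ℬ} {G : ℬ ⥤ 𝒜} (adj : L ⊣ G)
    {P₁ P₀ : 𝒜} (σ : P₁ ⟶ P₀) (X : ℬ) : X ∈ Dclass (L.map σ) ↔ G.obj X ∈ Dclass σ := by
  constructor
  · intro h g
    obtain ⟨k, hk⟩ := h ((adj.homEquiv _ _).symm g)
    exact ⟨adj.homEquiv _ _ k, by rw [← adj.homEquiv_naturality_left, hk, Equiv.apply_symm_apply]⟩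
  · intro h g
    obtain ⟨k, hk⟩ := h (adj.homEquiv _ _ g)
    exact ⟨(adj.homEquiv _ _).symm k, by
      rw [← adj.homEquiv_naturality_left_symm, hk, Equiv.symm_apply_apply]⟩

lemma IsTorsionClass.inter [HasZeroMorphisms 𝒜] {𝒞 𝒟 : Set 𝒜} (h𝒞 : IsTorsionClass 𝒞)
    (h𝒟 : IsTorsionClass 𝒟) : IsTorsionClass (𝒞 ∩ 𝒟) :=
  ⟨fun _ _ f hf hX => ⟨h𝒞.1 f hf hX.1, h𝒟.1 f hf hX.2⟩,
   fun ι Xs c hc hXs =>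
     ⟨h𝒞.2.1 ι Xs c hc fun i => (hXs i).1, h𝒟.2.1 ι Xs c hc fun i => (hXs i).2⟩,
   fun E hE h₁ h₃ => ⟨h𝒞.2.2 E hE h₁.1 h₃.1, h𝒟.2.2 E hE h₁.2 h₃.2⟩⟩

lemma IsTorsionClass.preimage [HasZeroMorphisms 𝒜] [HasZeroMorphisms ℬ] (G : 𝒜 ⥤ ℬ)
    [G.PreservesZeroMorphisms] [PreservesFiniteLimits G] [PreservesFiniteColimits G]
    [∀ ι : Type v, PreservesColimitsOfShape (Discrete ι) G] {𝒞 : Set ℬ}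
    (h : IsTorsionClass 𝒞) : IsTorsionClass (G.obj ⁻¹' 𝒞) :=
  ⟨fun _ _ f _ hX => h.1 (G.map f) inferInstance hX,
   fun ι Xs c hc hXs => h.2.1 ι _ _ (isColimitCofanMkObjOfIsColimit G Xs c.inj hc) hXs,
   fun _ hE h₁ h₃ => h.2.2 _ (hE.map_of_exact G) h₁ h₃⟩

lemma isTorsionClass_isZero [Preadditive 𝒜] : IsTorsionClass {X : 𝒜 | IsZero X} :=
  ⟨fun _ _ f _ hX => IsZero.of_epi f hX,
   fun _ _ _ hc hXs => (IsZero.iff_id_eq_zero _).2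
     (Cofan.IsColimit.hom_ext hc _ _ fun i => (hXs i).eq_of_src _ _),
   fun _ hE h₁ h₃ => hE.exact.isZero_X₂ (h₁.eq_of_src _ _) (h₃.eq_of_tgt _ _)⟩

end General

namespace CategoryTheory.Comma

variable {A : Type*} [Category A] {B : Type*} [Category B] {T : Type*} [Category T]
  {L : A ⥤ T} {R : B ⥤ T}

lemma epi_of_epi_left_of_epi_right {X Y : Comma L R} (f : X ⟶ Y) [Epi f.left] [Epi f.right] :
    Epi f :=
  ⟨fun g h hgh => Comma.hom_ext g h ((cancel_epi f.left).1 (congrArg CommaMorphism.left hgh))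
    ((cancel_epi f.right).1 (congrArg CommaMorphism.right hgh))⟩

variable {J : Type*} [Category J] (L R)

instance preservesLimitsOfShape_fst [HasLimitsOfShape J A] [HasLimitsOfShape J B]
    [PreservesLimitsOfShape J R] : PreservesLimitsOfShape J (Comma.fst L R) where
  preservesLimit :=
    preservesLimit_of_preserves_limit_cone
      (coneOfPreservesIsLimit _ (limit.isLimit _) (limit.isLimit _)) (limit.isLimit _)

instance preservesLimitsOfShape_snd [HasLimitsOfShape J A] [HasLimitsOfShape J B]
    [PreservesLimitsOfShape J R] : PreservesLimitsOfShape J (Comma.snd L R) where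
  preservesLimit :=
    preservesLimit_of_preserves_limit_cone
      (coneOfPreservesIsLimit _ (limit.isLimit _) (limit.isLimit _)) (limit.isLimit _)

end CategoryTheory.Comma

lemma ModuleCat.isZero_punit (T : Type u) [Ring T] : IsZero (ModuleCat.of T PUnit) :=
  ModuleCat.isZero_of_subsingleton _

lemma ModuleCat.mem_Dclass_zero_iff {R : Type u} [Ring R] (M : ModuleCat.{u} R) :
    M ∈ Dclass (0 : ModuleCat.of R R ⟶ ModuleCat.of R PUnit) ↔ IsZero M := by
  refine ⟨fun h => ?_, fun hM _ => ⟨0, hM.eq_of_tgt _ _⟩⟩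
  have : Subsingleton M := ⟨fun m m' => by
    have h₀ (m : M) : m = 0 := by
      obtain ⟨k, hk⟩ := h (ModuleCat.ofHom (LinearMap.toSpanSingleton R M m))
      simpa using (ConcreteCategory.congr_hom hk 1).symm
    rw [h₀ m, h₀ m']⟩
  exact ModuleCat.isZero_of_subsingleton M

section RightObj

variable {R S : Type u} [Ring R] [Ring S] (F : ModuleCat.{u} R ⥤ ModuleCat.{u} S)

instance : PreservesFiniteLimits (Comma.fst F (𝟭 (ModuleCat.{u} S))) :=
  ⟨fun _ _ _ => inferInstance⟩

instance : PreservesFiniteLimits (Comma.snd F (𝟭 (ModuleCat.{u} S))) :=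
  ⟨fun _ _ _ => inferInstance⟩

instance [PreservesFiniteColimits F] :
    PreservesFiniteColimits (Comma.fst F (𝟭 (ModuleCat.{u} S))) :=
  ⟨fun _ _ _ => inferInstance⟩

instance [PreservesFiniteColimits F] :
    PreservesFiniteColimits (Comma.snd F (𝟭 (ModuleCat.{u} S))) :=
  ⟨fun _ _ _ => inferInstance⟩

lemma rightObj_hom_ext {N : ModuleCat.{u} S} {X : Comma F (𝟭 (ModuleCat.{u} S))}
    {f g : rightObj F N ⟶ X} (h : f.right = g.right) : f = g :=
  Comma.hom_ext f g ((ModuleCat.isZero_punit R).eq_of_src _ _) h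

lemma hom_rightObj_ext {N : ModuleCat.{u} S} {X : Comma F (𝟭 (ModuleCat.{u} S))}
    {f g : X ⟶ rightObj F N} (h : f.right = g.right) : f = g :=
  Comma.hom_ext f g ((ModuleCat.isZero_punit R).eq_of_tgt _ _) h

lemma hom_comp_right_eq_zero {N : ModuleCat.{u} S} {X : Comma F (𝟭 (ModuleCat.{u} S))}
    (f : X ⟶ rightObj F N) : X.hom ≫ f.right = 0 := by
  rw [← Functor.id_map f.right, ← f.w]
  exact comp_zero

section Pair

variable {P P₁ P₀ : ModuleCat.{u} R} {Q Q₁ Q₀ : ModuleCat.{u} S}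
  {X Y : Comma F (𝟭 (ModuleCat.{u} S))}

def pairObjHomEquiv : (pairObj F P Q ⟶ X) ≃ (P ⟶ X.left) × (Q ⟶ X.right) where
  toFun f := (f.left, ModuleCat.ofHom (LinearMap.inr S _ _) ≫ f.right)
  invFun g :=
    { left := g.1
      right := ModuleCat.ofHom (LinearMap.coprod (F.map g.1 ≫ X.hom).hom g.2.hom)
      w := by ext x; simp [pairObj] }
  left_inv f := by
    have hw : (F.map f.left ≫ X.hom).hom = f.right.hom ∘ₗ LinearMap.inl S (F.obj P) Q :=
      congrArg ModuleCat.Hom.hom f.w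
    refine Comma.hom_ext _ _ rfl (ModuleCat.hom_ext ?_)
    change LinearMap.coprod (F.map f.left ≫ X.hom).hom (f.right.hom ∘ₗ LinearMap.inr S _ _) = _
    rw [hw]
    exact LinearMap.coprod_comp_inl_inr f.right.hom
  right_inv g := by ext <;> simp

lemma pairObjHomEquiv_comp (f : pairObj F P Q ⟶ X) (g : X ⟶ Y) :
    pairObjHomEquiv F (f ≫ g) =
      ((pairObjHomEquiv F f).1 ≫ g.left, (pairObjHomEquiv F f).2 ≫ g.right) := rfl

@[simp]
lemma pairObjHomEquiv_pairMap_comp (a : P₁ ⟶ P₀) (b : Q₁ ⟶ Q₀) (f : pairObj F P₀ Q₀ ⟶ X) :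
    pairObjHomEquiv F (pairMap F a b ≫ f) =
      (a ≫ (pairObjHomEquiv F f).1, b ≫ (pairObjHomEquiv F f).2) := by
  ext x
  · rfl
  · show f.right (F.map a 0, b x) = f.right (0, b x)
    rw [map_zero]

lemma mem_Dclass_pairMap_iff (a : P₁ ⟶ P₀) (b : Q₁ ⟶ Q₀) (X : Comma F (𝟭 (ModuleCat.{u} S))) :
    X ∈ Dclass (pairMap F a b) ↔ X.left ∈ Dclass a ∧ X.right ∈ Dclass b := by
  constructor
  · intro h
    refine ⟨fun g => ?_, fun g => ?_⟩
    · obtain ⟨k, hk⟩ := h ((pairObjHomEquiv F).symm (g, 0))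
      exact ⟨(pairObjHomEquiv F k).1, by simpa using congrArg (fun f ↦ (pairObjHomEquiv F f).1) hk⟩
    · obtain ⟨k, hk⟩ := h ((pairObjHomEquiv F).symm (0, g))
      exact ⟨(pairObjHomEquiv F k).2, by simpa using congrArg (fun f ↦ (pairObjHomEquiv F f).2) hk⟩
  · rintro ⟨hl, hr⟩ g
    obtain ⟨k₁, hk₁⟩ := hl (pairObjHomEquiv F g).1
    obtain ⟨k₂, hk₂⟩ := hr (pairObjHomEquiv F g).2
    exact ⟨(pairObjHomEquiv F).symm (k₁, k₂), (pairObjHomEquiv F).injective (by simp [hk₁, hk₂])⟩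

lemma projective_pairObj [PreservesFiniteColimits F] (hP : Projective P) (hQ : Projective Q) :
    Projective (pairObj F P Q) where
  factors {E X} f p _ := by
    have : Epi p.left := (Comma.fst F (𝟭 _)).map_epi p
    have : Epi p.right := (Comma.snd F (𝟭 _)).map_epi p
    obtain ⟨u, hu⟩ := hP.factors (pairObjHomEquiv F f).1 p.left
    obtain ⟨w, hw⟩ := hQ.factors (pairObjHomEquiv F f).2 p.right
    exact ⟨(pairObjHomEquiv F).symm (u, w),
      (pairObjHomEquiv F).injective (by simp [pairObjHomEquiv_comp, hu, hw])⟩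

end Pair

variable [F.Additive]

instance : (Comma.fst F (𝟭 (ModuleCat.{u} S))).PreservesZeroMorphisms := ⟨fun _ _ => rfl⟩

instance : (Comma.snd F (𝟭 (ModuleCat.{u} S))).PreservesZeroMorphisms := ⟨fun _ _ => rfl⟩

def rightObjHom {N : ModuleCat.{u} S} {X : Comma F (𝟭 (ModuleCat.{u} S))} (v : N ⟶ X.right) :
    rightObj F N ⟶ X where
  left := 0
  right := v
  w := by rw [Functor.map_zero, zero_comp]; exact zero_comp.symm

def homRightObj {N : ModuleCat.{u} S} {X : Comma F (𝟭 (ModuleCat.{u} S))} (v : X.right ⟶ N)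
    (hv : X.hom ≫ v = 0) : X ⟶ rightObj F N where
  left := 0
  right := v
  w := by simp [rightObj, hv]

def rightObjFunctor : ModuleCat.{u} S ⥤ Comma F (𝟭 (ModuleCat.{u} S)) where
  obj := rightObj F
  map f := rightObjHom F f
  map_id _ := rightObj_hom_ext F rfl
  map_comp _ _ := rightObj_hom_ext F rfl

def rightObjSndAdjunction : rightObjFunctor F ⊣ Comma.snd F (𝟭 (ModuleCat.{u} S)) :=
  Adjunction.mkOfHomEquiv
    { homEquiv := fun _ _ =>
        { toFun := fun f => f.right
          invFun := rightObjHom F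
          left_inv := fun _ => rightObj_hom_ext F rfl
          right_inv := fun _ => rfl }
      homEquiv_naturality_left_symm := fun _ _ => rightObj_hom_ext F rfl }

def cokerFunctor : Comma F (𝟭 (ModuleCat.{u} S)) ⥤ ModuleCat.{u} S where
  obj X := ModuleCat.of S (X.right ⧸ LinearMap.range X.hom.hom)
  map {X Y} f := ModuleCat.ofHom (Submodule.mapQ _ _ f.right.hom (by
    rintro _ ⟨a, rfl⟩
    exact ⟨F.map f.left a, ConcreteCategory.congr_hom f.w a⟩))
  map_id _ := ModuleCat.hom_ext (Submodule.linearMap_qext _ rfl)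
  map_comp _ _ := ModuleCat.hom_ext (Submodule.linearMap_qext _ rfl)

def cokerRightObjAdjunction : cokerFunctor F ⊣ rightObjFunctor F :=
  Adjunction.mkOfHomEquiv
    { homEquiv := fun X N =>
        { toFun := fun g => homRightObj F (ModuleCat.ofHom (LinearMap.range X.hom.hom).mkQ ≫ g)
            (by ext x
                show g (Submodule.Quotient.mk (X.hom x)) = 0
                rw [(Submodule.Quotient.mk_eq_zero _).2 (LinearMap.mem_range_self _ x)]
                exact map_zero _)
          invFun := fun f => ModuleCat.ofHom ((LinearMap.range X.hom.hom).liftQ f.right.hom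
            (LinearMap.range_le_ker_iff.2
              (congrArg ModuleCat.Hom.hom (hom_comp_right_eq_zero F f))))
          left_inv := fun _ => ModuleCat.hom_ext (Submodule.linearMap_qext _ rfl)
          right_inv := fun _ => hom_rightObj_ext F rfl }
      homEquiv_naturality_left_symm := fun _ _ =>
        ModuleCat.hom_ext (Submodule.linearMap_qext _ rfl)
      homEquiv_naturality_right := fun _ _ => hom_rightObj_ext F rfl }

instance : (rightObjFunctor F).IsLeftAdjoint := (rightObjSndAdjunction F).isLeftAdjoint

instance : (rightObjFunctor F).IsRightAdjoint := (cokerRightObjAdjunction F).isRightAdjoint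

instance : (rightObjFunctor F).PreservesZeroMorphisms := ⟨fun _ _ => rightObj_hom_ext F rfl⟩

noncomputable def isoRightObjOfIsZeroLeft {X : Comma F (𝟭 (ModuleCat.{u} S))}
    (hX : IsZero X.left) : X ≅ rightObj F X.right :=
  Comma.isoMk (hX.iso (ModuleCat.isZero_punit R)) (Iso.refl _)
    ((F.map_isZero hX).eq_of_src _ _)

lemma mem_Gen_rightObj_iff [PreservesFiniteColimits F]
    [∀ J : Type u, PreservesColimitsOfShape (Discrete J) F] {B : ModuleCat.{u} S}
    {X : Comma F (𝟭 (ModuleCat.{u} S))} :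
    X ∈ Gen (rightObj F B) ↔ IsZero X.left ∧ X.right ∈ Gen B := by
  refine ⟨fun h => ⟨(ModuleCat.isZero_punit R).of_mem_Gen ((Comma.fst _ _).map_mem_Gen h),
    (Comma.snd _ _).map_mem_Gen h⟩, fun ⟨hX, h⟩ => ?_⟩
  exact mem_Gen_of_iso (isoRightObjOfIsZeroLeft F hX).symm ((rightObjFunctor F).map_mem_Gen h)

section Presentations

variable {B : ModuleCat.{u} S}

def pairObjToRightObj (P : ModuleCat.{u} R) (Q : ModuleCat.{u} S) :
    pairObj F P Q ⟶ (rightObjFunctor F).obj Q :=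
  (pairObjHomEquiv F).symm (0, 𝟙 Q)

@[simp]
lemma pairObjHomEquiv_pairObjToRightObj (P : ModuleCat.{u} R) (Q : ModuleCat.{u} S) :
    pairObjHomEquiv F (pairObjToRightObj F P Q) = (0, 𝟙 Q) :=
  (pairObjHomEquiv F).apply_symm_apply _

lemma inr_comp_pairObjToRightObj_right (P : ModuleCat.{u} R) (Q : ModuleCat.{u} S) :
    ModuleCat.ofHom (LinearMap.inr S _ _) ≫ (pairObjToRightObj F P Q).right = 𝟙 Q :=
  congrArg Prod.snd (pairObjHomEquiv_pairObjToRightObj F P Q)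

instance (P : ModuleCat.{u} R) (Q : ModuleCat.{u} S) : Epi (pairObjToRightObj F P Q) := by
  have : Epi (pairObjToRightObj F P Q).left := (ModuleCat.isZero_punit R).epi _
  have : IsSplitEpi (pairObjToRightObj F P Q).right :=
    ⟨⟨⟨_, inr_comp_pairObjToRightObj_right F P Q⟩⟩⟩
  exact Comma.epi_of_epi_left_of_epi_right _

def pairObjPUnitIso (Q : ModuleCat.{u} S) :
    pairObj F (ModuleCat.of R PUnit) Q ≅ (rightObjFunctor F).obj Q where
  hom := pairObjToRightObj F _ Q
  inv := rightObjHom F (ModuleCat.ofHom (LinearMap.inr S _ _))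
  hom_inv_id := (pairObjHomEquiv F).injective <| Prod.ext
    ((ModuleCat.isZero_punit R).eq_of_src _ _) (by
      change (pairObjHomEquiv F (pairObjToRightObj F _ Q)).2 ≫
          ModuleCat.ofHom (LinearMap.inr S _ Q) =
        ModuleCat.ofHom (LinearMap.inr S (F.obj (ModuleCat.of R PUnit)) Q) ≫ 𝟙 _
      simp only [pairObjHomEquiv_pairObjToRightObj]
      exact (Category.id_comp _).trans (Category.comp_id _).symm)
  inv_hom_id := rightObj_hom_ext F (inr_comp_pairObjToRightObj_right F _ Q)

lemma pairMap_comp_pairObjPUnitIso_hom {P : ModuleCat.{u} R} {Q₁ Q₀ : ModuleCat.{u} S}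
    (a : P ⟶ ModuleCat.of R PUnit) (b : Q₁ ⟶ Q₀) :
    pairMap F a b ≫ (pairObjPUnitIso F Q₀).hom =
      pairObjToRightObj F P Q₁ ≫ (rightObjFunctor F).map b := by
  refine (pairObjHomEquiv F).injective (Prod.ext ((ModuleCat.isZero_punit R).eq_of_tgt _ _) ?_)
  change b ≫ (pairObjHomEquiv F (pairObjToRightObj F _ Q₀)).2 =
    (pairObjHomEquiv F (pairObjToRightObj F P Q₁)).2 ≫ b
  simp only [pairObjHomEquiv_pairObjToRightObj]
  exact (Category.comp_id b).trans (Category.id_comp b).symm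

def pairMapShortComplex {P : ModuleCat.{u} R} (a : P ⟶ ModuleCat.of R PUnit)
    (E : ShortComplex (ModuleCat.{u} S)) : ShortComplex (Comma F (𝟭 (ModuleCat.{u} S))) :=
  ShortComplex.mk (pairMap F a E.f) ((pairObjPUnitIso F E.X₂).hom ≫ (rightObjFunctor F).map E.g)
    (by rw [← Category.assoc, pairMap_comp_pairObjPUnitIso_hom, Category.assoc, ← Functor.map_comp,
      E.zero, Functor.map_zero, comp_zero])

lemma exact_pairMapShortComplex {P : ModuleCat.{u} R} (a : P ⟶ ModuleCat.of R PUnit)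
    {E : ShortComplex (ModuleCat.{u} S)} (hE : E.Exact) : (pairMapShortComplex F a E).Exact := by
  let φ : pairMapShortComplex F a E ⟶ E.map (rightObjFunctor F) :=
    { τ₁ := pairObjToRightObj F P E.X₁
      τ₂ := (pairObjPUnitIso F E.X₂).hom
      τ₃ := 𝟙 _
      comm₁₂ := (pairMap_comp_pairObjPUnitIso_hom F a E.f).symm
      comm₂₃ := (Category.comp_id _).symm }
  have : Epi φ.τ₁ := inferInstanceAs (Epi (pairObjToRightObj F P E.X₁))
  have : IsIso φ.τ₂ := inferInstanceAs (IsIso (pairObjPUnitIso F E.X₂).hom)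
  have : Mono φ.τ₃ := inferInstanceAs (Mono (𝟙 _))
  exact (ShortComplex.exact_iff_of_epi_of_isIso_of_mono φ).2 (hE.map _)

def ProjPres.toRightObj [PreservesFiniteColimits F] (p : ProjPres B) :
    ProjPres (rightObj F B) where
  P₁ := pairObj F (ModuleCat.of R R) p.P₁
  P₀ := pairObj F (ModuleCat.of R PUnit) p.P₀
  σ := pairMap F 0 p.σ
  π := (pairObjPUnitIso F p.P₀).hom ≫ (rightObjFunctor F).map p.π
  projective₁ := projective_pairObj F
    (ModuleCat.projective_of_free (Module.Basis.singleton PUnit.{1} R)) p.projective₁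
  projective₀ := projective_pairObj F (ModuleCat.isZero_punit R).projective p.projective₀
  epi := by
    have := p.epi
    exact (epi_comp _ _ : Epi ((pairObjPUnitIso F p.P₀).hom ≫ (rightObjFunctor F).map p.π))
  w := (pairMapShortComplex F 0 (ShortComplex.mk p.σ p.π p.w)).zero
  exact := exact_pairMapShortComplex F 0 p.exact

lemma ProjPres.mem_Dclass_toRightObj_iff [PreservesFiniteColimits F] (p : ProjPres B)
    (X : Comma F (𝟭 (ModuleCat.{u} S))) :
    X ∈ Dclass (p.toRightObj F).σ ↔ IsZero X.left ∧ X.right ∈ Dclass p.σ :=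
  (mem_Dclass_pairMap_iff F _ _ X).trans (and_congr_left' (ModuleCat.mem_Dclass_zero_iff _))

noncomputable def ProjPres.coker [PreservesFiniteColimits F] (q : ProjPres (rightObj F B)) :
    ProjPres B where
  P₁ := (cokerFunctor F).obj q.P₁
  P₀ := (cokerFunctor F).obj q.P₀
  σ := (cokerFunctor F).map q.σ
  π := ((cokerRightObjAdjunction F).homEquiv _ _).symm q.π
  projective₁ := (cokerRightObjAdjunction F).map_projective _ q.projective₁
  projective₀ := (cokerRightObjAdjunction F).map_projective _ q.projective₀
  epi := by
    have := q.epi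
    have hπ := (ModuleCat.epi_iff_surjective _).1 ((Comma.snd F (𝟭 _)).map_epi q.π)
    refine (ModuleCat.epi_iff_surjective _).2 fun b => ?_
    obtain ⟨y, hy⟩ := hπ b
    exact ⟨Submodule.Quotient.mk y, hy⟩
  w := ModuleCat.hom_ext (Submodule.linearMap_qext _
    (congrArg ModuleCat.Hom.hom (congrArg CommaMorphism.right q.w)))
  exact := by
    have hq := q.exact.map (Comma.snd F (𝟭 _))
    rw [ShortComplex.moduleCat_exact_iff] at hq ⊢
    intro x hx
    obtain ⟨y, rfl⟩ := Submodule.mkQ_surjective _ x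
    obtain ⟨z, hz⟩ := hq y hx
    exact ⟨Submodule.Quotient.mk z, congrArg Submodule.Quotient.mk hz⟩

lemma ProjPres.mem_Dclass_coker_iff [PreservesFiniteColimits F] (q : ProjPres (rightObj F B))
    (X : ModuleCat.{u} S) : X ∈ Dclass (q.coker F).σ ↔ rightObj F X ∈ Dclass q.σ :=
  (cokerRightObjAdjunction F).mem_Dclass_map_iff q.σ X

end Presentations

section Transfer

variable [PreservesFiniteColimits F] {B : ModuleCat.{u} S}

lemma isSilting_rightObj_of_isSilting [∀ J : Type u, PreservesColimitsOfShape (Discrete J) F]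
    (h : IsSilting B) : IsSilting (rightObj F B) := by
  obtain ⟨p, hp⟩ := h
  refine ⟨p.toRightObj F, Set.ext fun X => ?_⟩
  rw [p.mem_Dclass_toRightObj_iff F, hp, mem_Gen_rightObj_iff]

lemma isSilting_of_isSilting_rightObj [∀ J : Type u, PreservesColimitsOfShape (Discrete J) F]
    (h : IsSilting (rightObj F B)) : IsSilting B := by
  obtain ⟨q, hq⟩ := h
  refine ⟨q.coker F, Set.ext fun X => ?_⟩
  rw [q.mem_Dclass_coker_iff F, hq, mem_Gen_rightObj_iff]
  exact and_iff_right (ModuleCat.isZero_punit R)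

lemma isPartialSilting_rightObj_of_isPartialSilting
    [∀ J : Type u, PreservesColimitsOfShape (Discrete J) F] (h : IsPartialSilting B) :
    IsPartialSilting (rightObj F B) := by
  obtain ⟨p, hT, hB⟩ := h
  have hD : Dclass (p.toRightObj F).σ =
      (Comma.fst F (𝟭 _)).obj ⁻¹' {M | IsZero M} ∩ (Comma.snd F (𝟭 _)).obj ⁻¹' Dclass p.σ :=
    Set.ext (p.mem_Dclass_toRightObj_iff F)
  refine ⟨p.toRightObj F, ?_, (p.mem_Dclass_toRightObj_iff F _).2 ⟨ModuleCat.isZero_punit R, hB⟩⟩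
  rw [hD]
  exact (isTorsionClass_isZero.preimage _).inter (hT.preimage _)

lemma isPartialSilting_of_isPartialSilting_rightObj (h : IsPartialSilting (rightObj F B)) :
    IsPartialSilting B := by
  obtain ⟨q, hT, hB⟩ := h
  have hD : Dclass (q.coker F).σ = (rightObjFunctor F).obj ⁻¹' Dclass q.σ :=
    Set.ext (q.mem_Dclass_coker_iff F)
  exact ⟨q.coker F, hD ▸ hT.preimage _, (q.mem_Dclass_coker_iff F B).2 hB⟩

end Transfer

end RightObj

/-- Corollary.  Assume `F` commutes with direct sums.  Then `(0,B)` is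
silting (respectively, partial silting) in the comma category `(F, S-Mod)` if and only if
`B` is silting (respectively, partial silting) as a left `S`-module. -/
theorem rightObj_silting_iff {R S : Type u} [Ring R] [Ring S]
    (F : ModuleCat.{u} R ⥤ ModuleCat.{u} S) [F.Additive] [PreservesFiniteColimits F]
    [∀ J : Type u, PreservesColimitsOfShape (Discrete J) F]
    (B : ModuleCat.{u} S) :
    (IsSilting (rightObj F B) ↔ IsSilting B) ∧
    (IsPartialSilting (rightObj F B) ↔ IsPartialSilting B) :=
  ⟨⟨isSilting_of_isSilting_rightObj F, isSilting_rightObj_of_isSilting F⟩,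
    ⟨isPartialSilting_of_isPartialSilting_rightObj F,
      isPartialSilting_rightObj_of_isPartialSilting F⟩⟩
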